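/- arXiv:math/0011101 — 5 statements merged into one kernel-verified Lean document; each statement's English description precedes it below -/
import Mathlib

section
/- Let α₁,…,αₙ (n ≥ 1) be nonzero complex linear forms on ℂ^ℓ, Q(z) = ∏ᵢ αᵢ(z), M = {z ∈ ℂ^ℓ : Q(z) ≠ 0}, and F = Q⁻¹(1). Then the restriction Q : M → ℂ ∖ {0} is a locally trivial fiber bundle with fiber F: for every c ∈ ℂ ∖ {0} there exist an open neighborhood U ⊆ ℂ ∖ {0} of c and a homeomorphism φ : Q⁻¹(U) → U × F such that the first coordinate of φ(z) equals Q(z) for all z ∈ Q⁻¹(U). -/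
/-! `Q` is homogeneous of degree `n`, so `Q (a • z) = aⁿ Q z`. Over a neighbourhood `U` of
`c ≠ 0` on which `u ↦ u^{1/n}` has a continuous branch `ρ`, the map
`z ↦ (Q z, ρ(Q z)⁻¹ • z)` is a homeomorphism `Q⁻¹(U) ≃ₜ U × Q⁻¹(1)` with inverse
`(u, w) ↦ ρ(u) • w`. -/

theorem Finset.prod_linearMap_smul {R E ι : Type*} [CommSemiring R] [AddCommMonoid E]
    [Module R E] (s : Finset ι) (f : ι → E →ₗ[R] R) (a : R) (z : E) :
    ∏ i ∈ s, f i (a • z) = a ^ s.card * ∏ i ∈ s, f i z := by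
  simp only [map_smul, smul_eq_mul, Finset.prod_mul_distrib, Finset.prod_const]

theorem Complex.exists_continuousOn_nthRoot {n : ℕ} (hn : n ≠ 0) {c : ℂ} (hc : c ≠ 0) :
    ∃ U : Set ℂ, IsOpen U ∧ c ∈ U ∧ ∃ ρ : ℂ → ℂ, ContinuousOn ρ U ∧
      (∀ u ∈ U, ρ u ≠ 0) ∧ ∀ u ∈ U, ρ u ^ n = u := by
  obtain ⟨r, hr⟩ := IsAlgClosed.exists_pow_nat_eq c (Nat.pos_of_ne_zero hn)
  have hr0 : r ≠ 0 := by rintro rfl; exact hc (by rw [← hr, zero_pow hn])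
  refine ⟨(· / c) ⁻¹' slitPlane, isOpen_slitPlane.preimage (continuous_id.div_const c),
    by simp [div_self hc], fun u => r * (u / c) ^ (n⁻¹ : ℂ), ?_, ?_, ?_⟩
  · intro u hu
    exact (continuousAt_const.mul
      ((continuousAt_id.div_const c).cpow continuousAt_const hu)).continuousWithinAt
  · intro u hu
    have hu0 : u / c ≠ 0 := slitPlane_ne_zero hu
    exact mul_ne_zero hr0 (cpow_ne_zero_iff.2 (Or.inl hu0))
  · intro u _
    rw [mul_pow, hr, cpow_nat_inv_pow _ hn]
    field_simp

section HomogeneousTrivialization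

variable {𝕜 E : Type*} [Field 𝕜] [TopologicalSpace 𝕜] [ContinuousInv₀ 𝕜]
  [AddCommGroup E] [Module 𝕜 E] [TopologicalSpace E] [ContinuousSMul 𝕜 E]
  {Q : E → 𝕜} {n : ℕ} {U : Set 𝕜} {ρ : 𝕜 → 𝕜}

def homogeneousTrivialization (hQ : Continuous Q) (hQ_smul : ∀ (a : 𝕜) z, Q (a • z) = a ^ n * Q z)
    (hρ : ContinuousOn ρ U) (hρ_ne : ∀ u ∈ U, ρ u ≠ 0) (hρ_pow : ∀ u ∈ U, ρ u ^ n = u) :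
    {z // Q z ∈ U} ≃ₜ U × {z // Q z = 1} :=
  have hQ_mem (u : U) (w : {z // Q z = 1}) : Q (ρ u • w.1) = u := by
    rw [hQ_smul, w.2, mul_one, hρ_pow _ u.2]
  have hQ_one (z : {z // Q z ∈ U}) : Q ((ρ (Q z))⁻¹ • z.1) = 1 := by
    rw [hQ_smul, inv_pow, hρ_pow _ z.2, inv_mul_cancel₀]
    exact hρ_pow _ z.2 ▸ pow_ne_zero _ (hρ_ne _ z.2)
  have hρQ : Continuous fun z : {z // Q z ∈ U} => ρ (Q z) :=
    hρ.comp_continuous (hQ.comp continuous_subtype_val) fun z => z.2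
  { toFun z := (⟨Q z, z.2⟩, ⟨(ρ (Q z))⁻¹ • z.1, hQ_one z⟩)
    invFun p := ⟨ρ p.1 • p.2.1, (hQ_mem p.1 p.2).symm ▸ p.1.2⟩
    left_inv z := Subtype.ext (by simp only [smul_smul, mul_inv_cancel₀ (hρ_ne _ z.2), one_smul])
    right_inv p := by
      ext : 2
      · exact hQ_mem p.1 p.2
      · simp only [hQ_mem, smul_smul, inv_mul_cancel₀ (hρ_ne _ p.1.2), one_smul]
    continuous_toFun := ((hQ.comp continuous_subtype_val).subtype_mk _).prodMk
      (((hρQ.inv₀ fun z => hρ_ne _ z.2).smul continuous_subtype_val).subtype_mk _)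
    continuous_invFun :=
      ((hρ.comp_continuous (continuous_subtype_val.comp continuous_fst) fun p => p.1.2).smul
        (continuous_subtype_val.comp continuous_snd)).subtype_mk _ }

theorem homogeneousTrivialization_fst (hQ : Continuous Q)
    (hQ_smul : ∀ (a : 𝕜) z, Q (a • z) = a ^ n * Q z) (hρ : ContinuousOn ρ U)
    (hρ_ne : ∀ u ∈ U, ρ u ≠ 0) (hρ_pow : ∀ u ∈ U, ρ u ^ n = u) (z : {z // Q z ∈ U}) :
    ((homogeneousTrivialization hQ hQ_smul hρ hρ_ne hρ_pow z).1 : 𝕜) = Q z :=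
  rfl

end HomogeneousTrivialization

theorem milnor_fibration_locally_trivial_general {ℓ n : ℕ} (hn : 1 ≤ n)
    (α : Fin n → ((Fin ℓ → ℂ) →ₗ[ℂ] ℂ)) :
    ∀ c : ℂ, c ≠ 0 →
      ∃ U : Set ℂ, IsOpen U ∧ c ∈ U ∧ (0 : ℂ) ∉ U ∧
        ∃ φ : {z : Fin ℓ → ℂ // (∏ i, α i z) ∈ U} ≃ₜ
            (U × {z : Fin ℓ → ℂ // (∏ i, α i z) = 1}),
          ∀ z, ((φ z).1 : ℂ) = ∏ i, α i (z : Fin ℓ → ℂ) := by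
  intro c hc
  obtain ⟨U, hU, hcU, ρ, hρ, hρ_ne, hρ_pow⟩ :=
    Complex.exists_continuousOn_nthRoot (Nat.one_le_iff_ne_zero.mp hn) hc
  have h0U : (0 : ℂ) ∉ U := fun h0 => hρ_ne 0 h0 (pow_eq_zero_iff (by omega) |>.1 (hρ_pow 0 h0))
  have hQ : Continuous fun z => ∏ i, α i z :=
    continuous_finsetProd _ fun i _ => (α i).continuous_of_finiteDimensional
  have hQ_smul (a : ℂ) (z : Fin ℓ → ℂ) : ∏ i, α i (a • z) = a ^ n * ∏ i, α i z := by
    simpa using Finset.univ.prod_linearMap_smul α a z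
  exact ⟨U, hU, hcU, h0U, homogeneousTrivialization hQ hQ_smul hρ hρ_ne hρ_pow,
    homogeneousTrivialization_fst hQ hQ_smul hρ hρ_ne hρ_pow⟩

/-- The restriction of `Q = ∏ i, α i` to the complement
`M = {z | Q z ≠ 0}` is a locally trivial fiber bundle over `ℂ ∖ {0}` with fiber the Milnor
fiber `F = Q⁻¹(1)`: every nonzero `c` has an open neighborhood `U ⊆ ℂ ∖ {0}` over which
there is a trivializing homeomorphism `Q⁻¹(U) ≃ₜ U × F` whose first coordinate is `Q`. -/
theorem milnor_fibration_locally_trivial {ℓ n : ℕ} (hn : 1 ≤ n)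
    (α : Fin n → ((Fin ℓ → ℂ) →ₗ[ℂ] ℂ)) (hα : ∀ i, α i ≠ 0) :
    ∀ c : ℂ, c ≠ 0 →
      ∃ U : Set ℂ, IsOpen U ∧ c ∈ U ∧ (0 : ℂ) ∉ U ∧
        ∃ φ : {z : Fin ℓ → ℂ // (∏ i, α i z) ∈ U} ≃ₜ
            (U × {z : Fin ℓ → ℂ // (∏ i, α i z) = 1}),
          ∀ z, ((φ z).1 : ℂ) = ∏ i, α i (z : Fin ℓ → ℂ) :=
  milnor_fibration_locally_trivial_general hn α
end

section
/- Let α₁,…,αₙ (n ≥ 1) be nonzero complex linear forms on ℂ^ℓ, Q(z) = ∏ᵢ αᵢ(z), M = {z ∈ ℂ^ℓ : Q(z) ≠ 0}, and let M* be the image of M in the projective space ℙ(ℂ^ℓ). Then the map z ↦ ([z], α₁(z)) is a homeomorphism from M onto M* × (ℂ ∖ {0}); in particular M is homeomorphic to M* × ℂ*. -/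
/-- The quotient topology on the projectivization of a topological vector space. -/
noncomputable instance projectivizationTopology {K V : Type*} [DivisionRing K] [AddCommGroup V]
    [Module K V] [TopologicalSpace V] : TopologicalSpace (Projectivization K V) := by
  unfold Projectivization; infer_instance

open LinearAlgebra.Projectivization Topology

/-- The quotient map to projective space is a quotient map. -/
lemma projQuot_isQuotientMap {K V : Type*} [DivisionRing K] [AddCommGroup V] [Module K V]
    [TopologicalSpace V] :
    IsQuotientMap (Projectivization.mk' K : {v : V // v ≠ 0} → ℙ K V) :=
  isQuotientMap_quotient_mk'

/-- The quotient map to projective space is an open map. -/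
lemma projQuot_isOpenMap {K V : Type*} [Field K] [AddCommGroup V] [Module K V]
    [TopologicalSpace V] [ContinuousConstSMul K V] :
    IsOpenMap (Projectivization.mk' K : {v : V // v ≠ 0} → ℙ K V) := by
  intro U hU
  rw [← projQuot_isQuotientMap.isOpen_preimage]
  have key : (Projectivization.mk' K : {v : V // v ≠ 0} → ℙ K V) ⁻¹'
      (Projectivization.mk' K '' U) =
      ⋃ t : Kˣ, (fun v : {v : V // v ≠ 0} =>
        (⟨(t : K) • v.1, by simp [smul_ne_zero_iff, v.2]⟩ : {v : V // v ≠ 0})) ⁻¹' U := by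
    ext v
    simp only [Set.mem_preimage, Set.mem_image, Set.mem_iUnion]
    constructor
    · rintro ⟨u, hu, huv⟩
      rw [Projectivization.mk'_eq_mk, Projectivization.mk'_eq_mk,
        Projectivization.mk_eq_mk_iff] at huv
      obtain ⟨t, ht⟩ := huv
      refine ⟨t, ?_⟩
      have : (⟨(t : K) • v.1, by simp [smul_ne_zero_iff, v.2]⟩ : {v : V // v ≠ 0}) = u :=
        Subtype.ext (by rw [← ht]; rfl)
      rwa [this]
    · rintro ⟨t, ht⟩
      refine ⟨_, ht, ?_⟩
      rw [Projectivization.mk'_eq_mk, Projectivization.mk'_eq_mk,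
        Projectivization.mk_eq_mk_iff]
      exact ⟨t, rfl⟩
  rw [key]
  refine isOpen_iUnion fun t => hU.preimage ?_
  exact ((continuous_const_smul (t : K)).comp continuous_subtype_val).subtype_mk _

/-- For a central arrangement given by nonzero linear forms `α₁,…,αₙ`
(`n ≥ 1`) with complement `M = {z | ∏ i, α i z ≠ 0}` and projectivized complement `M*`
(the image of `M` in `ℙ(ℂ^ℓ)`), the map `z ↦ ([z], α₁ z)` is a homeomorphism from `M`
onto `M* × (ℂ ∖ {0})`; in particular `M ≅ M* × ℂ*`. -/
theorem complement_homeo_projectivized_prod {ℓ n : ℕ} (hn : 1 ≤ n)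
    (α : Fin n → ((Fin ℓ → ℂ) →ₗ[ℂ] ℂ)) (hα : ∀ i, α i ≠ 0) :
    ∃ e : {z : Fin ℓ → ℂ // (∏ i, α i z) ≠ 0} ≃ₜ
        ({q : Projectivization ℂ (Fin ℓ → ℂ) //
            ∃ z : Fin ℓ → ℂ, ∃ hz : z ≠ 0, (∏ i, α i z) ≠ 0 ∧ Projectivization.mk ℂ z hz = q}
          × {c : ℂ // c ≠ 0}),
      ∀ (z : {z : Fin ℓ → ℂ // (∏ i, α i z) ≠ 0}) (hz : (z : Fin ℓ → ℂ) ≠ 0),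
        ((e z).1 : Projectivization ℂ (Fin ℓ → ℂ)) = Projectivization.mk ℂ (z : Fin ℓ → ℂ) hz ∧
        ((e z).2 : ℂ) = α ⟨0, hn⟩ (z : Fin ℓ → ℂ) := by
  classical
  set V := Fin ℓ → ℂ with hV
  set A : V →ₗ[ℂ] ℂ := α ⟨0, hn⟩ with hAdef
  -- basic facts
  have hQA : ∀ {z : V}, (∏ i, α i z) ≠ 0 → A z ≠ 0 := fun {z} h =>
    Finset.prod_ne_zero_iff.mp h ⟨0, hn⟩ (Finset.mem_univ _)
  have hA0 : ∀ {z : V}, A z ≠ 0 → z ≠ 0 := by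
    rintro z h rfl; exact h (map_zero A)
  have hscale : ∀ (c : ℂ) (z : V), (∏ i, α i (c • z)) = c ^ n * ∏ i, α i z := by
    intro c z
    simp only [map_smul, smul_eq_mul]
    rw [Finset.prod_mul_distrib, Finset.prod_const, Finset.card_univ, Fintype.card_fin]
  have hscale_ne : ∀ {c : ℂ} {z : V}, c ≠ 0 → (∏ i, α i z) ≠ 0 →
      (∏ i, α i (c • z)) ≠ 0 := by
    intro c z hc hz
    rw [hscale]
    exact mul_ne_zero (pow_ne_zero _ hc) hz
  set M := {z : V // (∏ i, α i z) ≠ 0} with hM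
  set Mstar := {q : Projectivization ℂ V //
      ∃ z : V, ∃ hz : z ≠ 0, (∏ i, α i z) ≠ 0 ∧ Projectivization.mk ℂ z hz = q} with hMstar
  -- the representative of a point of Mstar also lies in the complement
  have hrep : ∀ q : Mstar, (∏ i, α i (q.1.rep)) ≠ 0 := by
    rintro ⟨q, z, hz, hprod, rfl⟩
    obtain ⟨t, ht⟩ := Projectivization.exists_smul_eq_mk_rep ℂ z hz
    rw [← ht, Units.smul_def]
    exact hscale_ne t.ne_zero hprod
  -- forward map
  set f : M → Mstar × {c : ℂ // c ≠ 0} := fun z =>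
    (⟨Projectivization.mk ℂ z.1 (hA0 (hQA z.2)), z.1, hA0 (hQA z.2), z.2, rfl⟩,
      ⟨A z.1, hQA z.2⟩) with hf
  -- inverse map
  set g : Mstar × {c : ℂ // c ≠ 0} → M := fun p =>
    ⟨((p.2 : ℂ) * (A p.1.1.rep)⁻¹) • p.1.1.rep,
      hscale_ne (mul_ne_zero p.2.2 (inv_ne_zero (hQA (hrep p.1)))) (hrep p.1)⟩ with hg
  have hleft : ∀ z : M, g (f z) = z := by
    intro z
    obtain ⟨t, ht⟩ := Projectivization.exists_smul_eq_mk_rep ℂ z.1 (hA0 (hQA z.2))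
    apply Subtype.ext
    show (A z.1 * (A ((Projectivization.mk ℂ z.1 (hA0 (hQA z.2))).rep))⁻¹) •
        (Projectivization.mk ℂ z.1 (hA0 (hQA z.2))).rep = z.1
    rw [← ht, Units.smul_def, map_smul, smul_eq_mul, smul_smul]
    have hAz : A z.1 ≠ 0 := hQA z.2
    have : A z.1 * ((t : ℂ) * A z.1)⁻¹ * (t : ℂ) = 1 := by
      field_simp
    rw [this, one_smul]
  have hright : ∀ p, f (g p) = p := by
    rintro ⟨⟨q, hq⟩, c, hc⟩
    have hrepne : (∏ i, α i q.rep) ≠ 0 := hrep ⟨q, hq⟩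
    have hArep : A q.rep ≠ 0 := hQA hrepne
    have hs : c * (A q.rep)⁻¹ ≠ 0 := mul_ne_zero hc (inv_ne_zero hArep)
    refine Prod.ext (Subtype.ext ?_) (Subtype.ext ?_)
    · show Projectivization.mk ℂ ((c * (A q.rep)⁻¹) • q.rep) _ = q
      have : Projectivization.mk ℂ ((c * (A q.rep)⁻¹) • q.rep)
          (hA0 (hQA (hscale_ne hs hrepne))) =
          Projectivization.mk ℂ q.rep q.rep_nonzero := by
        rw [Projectivization.mk_eq_mk_iff]
        exact ⟨Units.mk0 _ hs, rfl⟩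
      rw [this, Projectivization.mk_rep]
    · show A ((c * (A q.rep)⁻¹) • q.rep) = c
      rw [map_smul, smul_eq_mul]
      field_simp
  -- continuity of A
  have hAc : Continuous A := A.continuous_of_finiteDimensional
  have hprodc : Continuous fun z : V => ∏ i, α i z :=
    continuous_finset_prod _ fun i _ => (α i).continuous_of_finiteDimensional
  have hMopen : IsOpen {z : V | (∏ i, α i z) ≠ 0} :=
    isOpen_ne.preimage hprodc
  -- the inclusion M → {v // v ≠ 0}
  set j : M → {v : V // v ≠ 0} := fun z => ⟨z.1, hA0 (hQA z.2)⟩ with hj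
  have hjc : Continuous j := continuous_subtype_val.subtype_mk _
  have hjopen : IsOpenMap j := by
    intro U hU
    obtain ⟨O, hO, rfl⟩ := isOpen_induced_iff.mp hU
    have : j '' (Subtype.val ⁻¹' O) =
        Subtype.val ⁻¹' (O ∩ {z : V | (∏ i, α i z) ≠ 0}) := by
      ext w
      constructor
      · rintro ⟨z, hz, rfl⟩
        exact ⟨hz, z.2⟩
      · rintro ⟨hw1, hw2⟩
        exact ⟨⟨w.1, hw2⟩, hw1, Subtype.ext rfl⟩
    rw [this]
    exact (hO.inter hMopen).preimage continuous_subtype_val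
  -- the projection M → Mstar
  set πM : M → Mstar := fun z => (f z).1 with hπM
  have hπMc : Continuous πM := by
    refine Continuous.subtype_mk ?_ _
    exact (projQuot_isQuotientMap.continuous).comp hjc
  have hπMopen : IsOpenMap πM := by
    intro U hU
    have : πM '' U = Subtype.val ⁻¹' (Projectivization.mk' ℂ '' (j '' U)) := by
      ext q
      constructor
      · rintro ⟨z, hz, rfl⟩
        exact ⟨j z, ⟨z, hz, rfl⟩, rfl⟩
      · rintro ⟨w, ⟨z, hz, rfl⟩, hw⟩
        exact ⟨z, hz, Subtype.ext hw⟩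
    rw [this]
    exact ((projQuot_isOpenMap _ (hjopen _ hU)).preimage continuous_subtype_val)
  have hπMsurj : Function.Surjective πM := by
    rintro ⟨q, z, hz, hprod, rfl⟩
    exact ⟨⟨z, hprod⟩, rfl⟩
  -- the product quotient map
  have hquot : IsQuotientMap (Prod.map πM (id : {c : ℂ // c ≠ 0} → {c : ℂ // c ≠ 0})) :=
    (hπMopen.prodMap IsOpenMap.id).isQuotientMap
      (hπMc.prodMap continuous_id)
      (hπMsurj.prodMap Function.surjective_id)
  -- continuity of g
  have hgc : Continuous g := by
    rw [hquot.continuous_iff]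
    have heq : g ∘ Prod.map πM id = fun p : M × {c : ℂ // c ≠ 0} =>
        (⟨((p.2 : ℂ) * (A p.1.1)⁻¹) • p.1.1,
          hscale_ne (mul_ne_zero p.2.2 (inv_ne_zero (hQA p.1.2))) p.1.2⟩ : M) := by
      funext p
      obtain ⟨z, c⟩ := p
      apply Subtype.ext
      obtain ⟨t, ht⟩ := Projectivization.exists_smul_eq_mk_rep ℂ z.1 (hA0 (hQA z.2))
      show ((c : ℂ) * (A ((Projectivization.mk ℂ z.1 (hA0 (hQA z.2))).rep))⁻¹) •
          (Projectivization.mk ℂ z.1 (hA0 (hQA z.2))).rep = ((c : ℂ) * (A z.1)⁻¹) • z.1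
      rw [← ht, Units.smul_def, map_smul, smul_eq_mul, smul_smul]
      have hAz : A z.1 ≠ 0 := hQA z.2
      congr 1
      field_simp
    rw [heq]
    refine Continuous.subtype_mk ?_ _
    exact ((continuous_subtype_val.comp continuous_snd).mul
      (((hAc.comp (continuous_subtype_val.comp continuous_fst)).inv₀
        fun p => hQA p.1.2))).smul (continuous_subtype_val.comp continuous_fst)
  have hfc : Continuous f := by
    refine Continuous.prodMk (hπMc) ?_
    exact ((hAc.comp continuous_subtype_val)).subtype_mk _
  refine ⟨⟨⟨f, g, hleft, hright⟩, hfc, hgc⟩, ?_⟩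
  intro z hz
  exact ⟨rfl, rfl⟩
end

section
/- Let α₁,…,αₙ (n ≥ 1) be nonzero complex linear forms on ℂ^ℓ, Q(z) = ∏ᵢ αᵢ(z), M = {z : Q(z) ≠ 0}, F = Q⁻¹(1), and M* the image of M in ℙ(ℂ^ℓ). Then the restriction to F of the quotient map π : ℂ^ℓ ∖ {0} → ℙ(ℂ^ℓ) is an n-fold covering map of F onto M*: it is a covering map, and every fiber π⁻¹([z]) ∩ F has exactly n elements. -/
open Topology Filter
open scoped LinearAlgebra.Projectivization

namespace Projectivization

variable {K V : Type*} [DivisionRing K] [AddCommGroup V] [Module K V] [TopologicalSpace V]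

theorem isOpenMap_mk' [ContinuousConstSMul K V] :
    IsOpenMap (mk' K : {v : V // v ≠ 0} → ℙ K V) := by
  intro U hU
  have saturation : mk' K ⁻¹' (mk' K '' U) =
      ⋃ c : Kˣ, (fun v : {v : V // v ≠ 0} => (⟨c • v.1, (smul_ne_zero_iff_ne c).2 v.2⟩ :
        {v : V // v ≠ 0})) ⁻¹' U := by
    ext v
    simp only [Set.mem_preimage, Set.mem_iUnion, mk'_eq_mk]
    constructor
    · rintro ⟨u, hu, huv⟩
      obtain ⟨c, hc⟩ := (mk_eq_mk_iff K _ _ u.2 v.2).1 huv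
      exact ⟨c, by rwa [show (⟨c • v.1, _⟩ : {v : V // v ≠ 0}) = u from Subtype.ext hc]⟩
    · rintro ⟨c, hc⟩
      exact ⟨_, hc, (mk_eq_mk_iff K _ _ _ v.2).2 ⟨c, rfl⟩⟩
  refine isQuotientMap_quotient_mk'.isOpen_preimage.1 ?_
  change IsOpen (mk' K ⁻¹' (mk' K '' U))
  rw [saturation]
  exact isOpen_iUnion fun c => hU.preimage
    ((continuous_subtype_val.const_smul (c : K)).subtype_mk _)

end Projectivization

namespace HyperplaneArrangement

variable {V : Type*} [NormedAddCommGroup V] [NormedSpace ℂ V] {n : ℕ}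
  (α : Fin n → V →ₗ[ℂ] ℂ)

theorem prod_apply_smul (c : ℂ) (v : V) : ∏ i, α i (c • v) = c ^ n * ∏ i, α i v := by
  simp only [map_smul, smul_eq_mul, Finset.prod_mul_distrib, Finset.prod_const,
    Finset.card_univ, Fintype.card_fin]

def milnorFiber : SubMulAction (rootsOfUnity n ℂ) V where
  carrier := {z | ∏ i, α i z = 1}
  smul_mem' ζ z hz := by
    simp only [Set.mem_ofPred_eq, Subgroup.smul_def, Units.smul_def] at hz ⊢
    rw [prod_apply_smul, hz, mul_one, ← Units.val_pow_eq_pow_val, ζ.2, Units.val_one]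

theorem mem_milnorFiber {z : V} : z ∈ milnorFiber α ↔ ∏ i, α i z = 1 := Iff.rfl

theorem ne_zero_of_mem_milnorFiber [NeZero n] (z : milnorFiber α) : (z : V) ≠ 0 := by
  intro hz
  have := (mem_milnorFiber α).1 z.2
  rw [hz, ← zero_smul ℂ (0 : V), prod_apply_smul, zero_pow (NeZero.ne n), zero_mul] at this
  exact zero_ne_one this

instance : ContinuousConstSMul (rootsOfUnity n ℂ) (milnorFiber α) :=
  ⟨fun ζ => (continuous_subtype_val.const_smul ζ).subtype_mk _⟩

instance [NeZero n] : IsCancelSMul (rootsOfUnity n ℂ) (milnorFiber α) :=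
  isCancelSMul_iff_eq_one_of_smul_eq.2 fun ζ z hζz => by
    have h : ((ζ : ℂˣ) : ℂ) • (z : V) = ((1 : ℂˣ) : ℂ) • (z : V) := by
      rw [Units.val_one, one_smul]; exact congrArg Subtype.val hζz
    exact Subtype.ext (Units.ext (smul_left_injective ℂ (ne_zero_of_mem_milnorFiber α z) h))

section

variable [FiniteDimensional ℂ V]

theorem continuous_prod_apply : Continuous fun v : V => ∏ i, α i v :=
  continuous_finsetProd _ fun i _ => (α i).continuous_of_finiteDimensional

instance : LocallyCompactSpace (milnorFiber α) :=
  (isClosed_eq (continuous_prod_apply α) continuous_const).locallyCompactSpace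

end

def projectivizedComplement : Set (ℙ ℂ V) :=
  {q | ∃ z : V, ∃ hz : z ≠ 0, ∏ i, α i z ≠ 0 ∧ Projectivization.mk ℂ z hz = q}

variable [NeZero n]

noncomputable def milnorFiberProj (z : milnorFiber α) : projectivizedComplement α :=
  ⟨.mk ℂ z (ne_zero_of_mem_milnorFiber α z), z, ne_zero_of_mem_milnorFiber α z,
    by rw [(mem_milnorFiber α).1 z.2]; exact one_ne_zero, rfl⟩

theorem continuous_milnorFiberProj : Continuous (milnorFiberProj α) :=
  (continuous_quotient_mk'.comp (continuous_subtype_val.subtype_mk _)).subtype_mk _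

theorem milnorFiberProj_eq_iff {z w : milnorFiber α} :
    milnorFiberProj α z = milnorFiberProj α w ↔ z ∈ MulAction.orbit (rootsOfUnity n ℂ) w := by
  rw [Subtype.ext_iff]
  change Projectivization.mk ℂ _ _ = Projectivization.mk ℂ _ _ ↔ _
  rw [Projectivization.mk_eq_mk_iff]
  constructor
  · rintro ⟨c, hc⟩
    have hcn : c ^ n = 1 := by
      have hz := (mem_milnorFiber α).1 z.2
      rw [← hc, Units.smul_def, prod_apply_smul, (mem_milnorFiber α).1 w.2, mul_one] at hz
      exact Units.ext hz
    exact ⟨⟨c, (mem_rootsOfUnity _ _).2 hcn⟩, Subtype.ext hc⟩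
  · rintro ⟨ζ, rfl⟩
    exact ⟨ζ, rfl⟩

theorem milnorFiberProj_surjective : Function.Surjective (milnorFiberProj α) := by
  rintro ⟨_, z, hz, hQz, rfl⟩
  set c : ℂ := (∏ i, α i z)⁻¹ ^ (n : ℂ)⁻¹
  have hcn : c ^ n = (∏ i, α i z)⁻¹ := Complex.cpow_nat_inv_pow _ (NeZero.ne n)
  refine ⟨⟨c • z, by rw [mem_milnorFiber, prod_apply_smul, hcn, inv_mul_cancel₀ hQz]⟩,
    Subtype.ext ?_⟩
  exact (Projectivization.mk_eq_mk_iff' ℂ _ _ _ hz).2 ⟨c, rfl⟩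

variable [FiniteDimensional ℂ V]

theorem isOpen_setOf_exists_smul_mem_milnorFiber {U : Set V} (hU : IsOpen U) :
    IsOpen {v : V | ∃ c : ℂ, c • v ∈ U ∧ c • v ∈ milnorFiber α} := by
  rw [isOpen_iff_mem_nhds]
  rintro v ⟨c, hcU, hcF⟩
  have hQ : Continuous fun w : V => ∏ i, α i w := continuous_prod_apply α
  have hcv : c ^ n * ∏ i, α i v = 1 := by rw [← prod_apply_smul]; exact hcF
  have hQv : ∏ i, α i v ≠ 0 := right_ne_zero_of_mul_eq_one hcv
  set r : V → ℂ := fun w => c * ((∏ i, α i v) / ∏ i, α i w) ^ (n : ℂ)⁻¹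
  have hr : Tendsto r (𝓝 v) (𝓝 c) := by
    have : ContinuousAt r v := continuousAt_const.mul
      ((continuousAt_cpow_const (by simp [hQv])).comp (continuousAt_const.div hQ.continuousAt hQv))
    simpa [r, hQv] using this.tendsto
  filter_upwards [(hr.smul tendsto_id).eventually (hU.mem_nhds hcU),
    hQ.continuousAt.eventually_ne hQv] with w hwU hw0
  refine ⟨r w, hwU, ?_⟩
  change ∏ i, α i (r w • w) = 1
  rw [prod_apply_smul, mul_pow, Complex.cpow_nat_inv_pow _ (NeZero.ne n), mul_assoc,
    div_mul_cancel₀ _ hw0, hcv]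

theorem isOpenMap_milnorFiberProj : IsOpenMap (milnorFiberProj α) := by
  have hopen : IsOpenMap fun z => (milnorFiberProj α z : ℙ ℂ V) := by
    intro s hs
    obtain ⟨U, hU, rfl⟩ := isOpen_induced_iff.1 hs
    have cone : (fun z => (milnorFiberProj α z : ℙ ℂ V)) '' (Subtype.val ⁻¹' U) =
        Projectivization.mk' ℂ ''
          (Subtype.val ⁻¹' {v : V | ∃ c : ℂ, c • v ∈ U ∧ c • v ∈ milnorFiber α}) := by
      ext q
      constructor
      · rintro ⟨z, hzU, rfl⟩
        exact ⟨⟨z, ne_zero_of_mem_milnorFiber α z⟩, ⟨1, by simpa using hzU, by simp⟩, rfl⟩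
      · rintro ⟨v, ⟨c, hcU, hcF⟩, rfl⟩
        exact ⟨⟨c • v, hcF⟩, hcU, (Projectivization.mk_eq_mk_iff' ℂ _ _ _ v.2).2 ⟨c, rfl⟩⟩
    rw [cone]
    exact Projectivization.isOpenMap_mk' _
      ((isOpen_setOf_exists_smul_mem_milnorFiber α hU).preimage continuous_subtype_val)
  exact hopen.codRestrict _

theorem isQuotientCoveringMap_milnorFiberProj :
    IsQuotientCoveringMap (milnorFiberProj α) (rootsOfUnity n ℂ) :=
  ((isOpenMap_milnorFiberProj α).isQuotientMap (continuous_milnorFiberProj α)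
    (milnorFiberProj_surjective α)).isQuotientCoveringMap_of_properlyDiscontinuousSMul
    (milnorFiberProj_eq_iff α)

theorem card_milnorFiberProj_fiber (q : projectivizedComplement α) :
    Nat.card {z // milnorFiberProj α z = q} = n := by
  obtain ⟨z, rfl⟩ := milnorFiberProj_surjective α q
  exact (Nat.card_congr
    ((isQuotientCoveringMap_milnorFiberProj α).fiberEquivGroup ⟨z, rfl⟩)).trans
    (Complex.card_rootsOfUnity n)

end HyperplaneArrangement

open HyperplaneArrangement

theorem milnor_fiber_covering_projectivized_complement_general {ℓ n : ℕ} (hn : 1 ≤ n)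
    (α : Fin n → ((Fin ℓ → ℂ) →ₗ[ℂ] ℂ)) :
    ∃ p : {z : Fin ℓ → ℂ // (∏ i, α i z) = 1} →
        {q : Projectivization ℂ (Fin ℓ → ℂ) //
          ∃ z : Fin ℓ → ℂ, ∃ hz : z ≠ 0, (∏ i, α i z) ≠ 0 ∧ Projectivization.mk ℂ z hz = q},
      (∀ (z : {z : Fin ℓ → ℂ // (∏ i, α i z) = 1}) (hz : (z : Fin ℓ → ℂ) ≠ 0),
        (p z : Projectivization ℂ (Fin ℓ → ℂ)) = Projectivization.mk ℂ (z : Fin ℓ → ℂ) hz) ∧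
      IsCoveringMap p ∧
      ∀ q, Nat.card {z : {z : Fin ℓ → ℂ // (∏ i, α i z) = 1} // p z = q} = n := by
  have : NeZero n := ⟨by omega⟩
  exact ⟨milnorFiberProj α, fun _ _ => rfl, (isQuotientCoveringMap_milnorFiberProj α).isCoveringMap,
    card_milnorFiberProj_fiber α⟩

/-- For a central arrangement given by nonzero linear forms `α₁,…,αₙ`
(`n ≥ 1`), the restriction to the Milnor fiber `F = Q⁻¹(1)` of the quotient map
`π : ℂ^ℓ ∖ {0} → ℙ(ℂ^ℓ)` is an `n`-fold covering map of `F` onto the projectivized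
complement `M*`: it is a covering map and each of its fibers has exactly `n` elements. -/
theorem milnor_fiber_covering_projectivized_complement {ℓ n : ℕ} (hn : 1 ≤ n)
    (α : Fin n → ((Fin ℓ → ℂ) →ₗ[ℂ] ℂ)) (hα : ∀ i, α i ≠ 0) :
    ∃ p : {z : Fin ℓ → ℂ // (∏ i, α i z) = 1} →
        {q : Projectivization ℂ (Fin ℓ → ℂ) //
          ∃ z : Fin ℓ → ℂ, ∃ hz : z ≠ 0, (∏ i, α i z) ≠ 0 ∧ Projectivization.mk ℂ z hz = q},
      (∀ (z : {z : Fin ℓ → ℂ // (∏ i, α i z) = 1}) (hz : (z : Fin ℓ → ℂ) ≠ 0),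
        (p z : Projectivization ℂ (Fin ℓ → ℂ)) = Projectivization.mk ℂ (z : Fin ℓ → ℂ) hz) ∧
      IsCoveringMap p ∧
      ∀ q, Nat.card {z : {z : Fin ℓ → ℂ // (∏ i, α i z) = 1} // p z = q} = n :=
  milnor_fiber_covering_projectivized_complement_general hn α
end

section
/- Let α₁,…,αₙ (n ≥ 1) be nonzero complex linear forms on ℂ^ℓ, M = {z ∈ ℂ^ℓ : ∏ᵢ αᵢ(z) ≠ 0}, and M* the image of M in ℙ(ℂ^ℓ). Then M is homotopy equivalent to M* × S¹, where S¹ is the circle. -/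
/-!
Fix one form `φ = α₀` of the arrangement. The complement `M` is a cone on which `φ` does not
vanish, so `z ↦ ([z], φ z)` is a homeomorphism `M ≃ M* × ℂˣ` whose inverse sends `([v], c)` to
`c • v / φ v`. That inverse is continuous because the projection of the nonzero vectors onto
projective space is an open quotient map. Finally `ℂˣ ≃ S¹ × (0, ∞)` retracts onto the circle.
-/

open Metric Set Topology
open scoped ContinuousMap LinearAlgebra.Projectivization

namespace Projectivization

variable {K V : Type*} [Field K] [AddCommGroup V] [Module K V]

-- The representative on the hyperplane `φ = 1`; it is `0` where `φ` vanishes, since `0⁻¹ = 0`,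
-- which makes `normalizedRep_mk` hold for every `v`.
noncomputable def normalizedRep (φ : V →ₗ[K] K) (q : ℙ K V) : V := (φ q.rep)⁻¹ • q.rep

theorem normalizedRep_mk (φ : V →ₗ[K] K) (v : V) (hv : v ≠ 0) :
    normalizedRep φ (mk K v hv) = (φ v)⁻¹ • v := by
  obtain ⟨a, ha⟩ := exists_smul_eq_mk_rep K v hv
  rw [normalizedRep, ← ha, Units.smul_def, map_smul, smul_eq_mul, smul_smul, mul_inv,
    mul_comm _ (φ v)⁻¹, mul_assoc, inv_mul_cancel₀ a.ne_zero, mul_one]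

theorem map_normalizedRep (φ : V →ₗ[K] K) {q : ℙ K V} (hq : φ q.rep ≠ 0) :
    φ (normalizedRep φ q) = 1 := by
  rw [normalizedRep, map_smul, smul_eq_mul, inv_mul_cancel₀ hq]

theorem mk_smul_normalizedRep (φ : V →ₗ[K] K) {q : ℙ K V} {c : K}
    (h : c • normalizedRep φ q ≠ 0) : mk K (c • normalizedRep φ q) h = q := by
  conv_rhs => rw [← mk_rep q]
  exact (mk_eq_mk_iff' K _ _ _ _).2 ⟨c * (φ q.rep)⁻¹, mul_smul ..⟩

section Cone

variable {φ : V →ₗ[K] K} {U : Set V} (hU : ∀ c : K, c ≠ 0 → ∀ v ∈ U, c • v ∈ U)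
include hU

theorem rep_mk_mem {v : V} (hv : v ≠ 0) (hvU : v ∈ U) : (mk K v hv).rep ∈ U := by
  obtain ⟨a, ha⟩ := exists_smul_eq_mk_rep K v hv
  exact ha ▸ hU a a.ne_zero v hvU

theorem smul_normalizedRep_mem (hφ : ∀ v ∈ U, φ v ≠ 0) {c : K} (hc : c ≠ 0) {q : ℙ K V}
    (hq : q.rep ∈ U) : c • normalizedRep φ q ∈ U := by
  rw [normalizedRep, smul_smul]
  exact hU _ (mul_ne_zero hc (inv_ne_zero (hφ _ hq))) _ hq

end Cone

variable [TopologicalSpace V]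

theorem isOpenQuotientMap_mk' [ContinuousConstSMul K V] :
    IsOpenQuotientMap (mk' K : {v : V // v ≠ 0} → ℙ K V) := by
  have hq : IsQuotientMap (mk' K : {v : V // v ≠ 0} → ℙ K V) := isQuotientMap_quotient_mk'
  refine ⟨hq.surjective, hq.continuous, fun W hW => ?_⟩
  have hsat : mk' K ⁻¹' (mk' K '' W) =
      ⋃ c : Kˣ, Subtype.map (c • ·) (fun _ => smul_ne_zero c.ne_zero) ⁻¹' W := by
    ext v
    simp only [mem_preimage, mem_image, mem_iUnion, mk'_eq_mk]
    constructor
    · rintro ⟨u, hu, h⟩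
      obtain ⟨c, hc⟩ := (mk_eq_mk_iff K _ _ u.2 v.2).1 h
      exact ⟨c, by convert hu using 1; exact Subtype.ext hc⟩
    · rintro ⟨c, hc⟩
      exact ⟨_, hc, (mk_eq_mk_iff K _ _ _ _).2 ⟨c, rfl⟩⟩
  rw [← hq.isOpen_preimage, hsat]
  exact isOpen_iUnion fun c => hW.preimage ((continuous_const_smul _).subtype_map _)

variable [TopologicalSpace K] [IsTopologicalDivisionRing K] [ContinuousSMul K V]

theorem continuousAt_normalizedRep (φ : V →L[K] K) {q : ℙ K V} (hq : φ q.rep ≠ 0) :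
    ContinuousAt (normalizedRep (φ : V →ₗ[K] K)) q := by
  have hcomp : normalizedRep (φ : V →ₗ[K] K) ∘ mk' K =
      fun v : {v : V // v ≠ 0} => (φ v)⁻¹ • (v : V) :=
    funext fun v => normalizedRep_mk _ v.1 v.2
  have key := isOpenQuotientMap_mk'.continuousAt_comp_iff (g := normalizedRep (φ : V →ₗ[K] K))
    (x := ⟨q.rep, q.rep_nonzero⟩)
  rw [hcomp, mk'_eq_mk, mk_rep] at key
  exact key.1 <| ((φ.continuous.comp continuous_subtype_val).continuousAt.inv₀ hq).smul
    continuous_subtype_val.continuousAt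

noncomputable def coneHomeomorph (φ : V →L[K] K) (U : Set V) (hφ : ∀ v ∈ U, φ v ≠ 0)
    (hU : ∀ c : K, c ≠ 0 → ∀ v ∈ U, c • v ∈ U) :
    U ≃ₜ {q : ℙ K V // ∃ v, ∃ hv : v ≠ 0, v ∈ U ∧ mk K v hv = q} × {c : K // c ≠ 0} where
  toFun v := (⟨mk K v (ne_zero_of_map (hφ v v.2)), v, _, v.2, rfl⟩, ⟨φ v, hφ v v.2⟩)
  invFun x := ⟨x.2.1 • normalizedRep (φ : V →ₗ[K] K) x.1.1, by
    obtain ⟨⟨_, v, hv, hvU, rfl⟩, c, hc⟩ := x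
    exact smul_normalizedRep_mem hU hφ hc (rep_mk_mem hU hv hvU)⟩
  left_inv v := by
    ext
    simp only [normalizedRep_mk, ContinuousLinearMap.coe_coe, smul_inv_smul₀ (hφ v v.2)]
  right_inv := by
    rintro ⟨⟨_, v, hv, hvU, rfl⟩, c, hc⟩
    have hrep := hφ _ (rep_mk_mem hU hv hvU)
    ext
    · exact mk_smul_normalizedRep _ _
    · change φ (c • normalizedRep (φ : V →ₗ[K] K) _) = c
      rw [map_smul, ← ContinuousLinearMap.coe_coe, map_normalizedRep _ hrep, smul_eq_mul,
        mul_one]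
  continuous_toFun := by
    refine .prodMk (.subtype_mk (isOpenQuotientMap_mk'.continuous.comp ?_) _) (by fun_prop)
    fun_prop
  continuous_invFun := by
    have hcont : ContinuousOn (normalizedRep (φ : V →ₗ[K] K))
        {q | ∃ v, ∃ hv : v ≠ 0, v ∈ U ∧ mk K v hv = q} := by
      rintro _ ⟨v, hv, hvU, rfl⟩
      exact (continuousAt_normalizedRep φ (hφ _ (rep_mk_mem hU hv hvU))).continuousWithinAt
    exact .subtype_mk (.smul (continuous_subtype_val.comp continuous_snd)
      (hcont.domRestrict.comp continuous_fst)) _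

end Projectivization

theorem nonempty_prod_homotopyEquiv_of_contractibleSpace (X Y : Type*) [TopologicalSpace X]
    [TopologicalSpace Y] [ContractibleSpace Y] : Nonempty (X × Y ≃ₕ X) :=
  let ⟨e⟩ := ContractibleSpace.hequiv_unit Y
  ⟨((ContinuousMap.HomotopyEquiv.refl X).prodCongr e).trans
    (Homeomorph.prodPUnit X).toHomotopyEquiv⟩

theorem nonempty_compl_zero_homotopyEquiv_sphere (E : Type*) [NormedAddCommGroup E]
    [NormedSpace ℝ E] : Nonempty (({0}ᶜ : Set E) ≃ₕ sphere (0 : E) 1) := by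
  have := (convex_Ioi (0 : ℝ)).contractibleSpace nonempty_Ioi
  obtain ⟨e⟩ :=
    nonempty_prod_homotopyEquiv_of_contractibleSpace (sphere (0 : E) 1) (Ioi (0 : ℝ))
  exact ⟨(homeomorphUnitSphereProd E).toHomotopyEquiv.trans e⟩

theorem complement_homotopy_equiv_projectivized_prod_circle_general {ℓ n : ℕ} (hn : 1 ≤ n)
    (α : Fin n → ((Fin ℓ → ℂ) →ₗ[ℂ] ℂ)) :
    Nonempty (ContinuousMap.HomotopyEquiv {z : Fin ℓ → ℂ // (∏ i, α i z) ≠ 0}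
      ({q : Projectivization ℂ (Fin ℓ → ℂ) //
          ∃ z : Fin ℓ → ℂ, ∃ hz : z ≠ 0, (∏ i, α i z) ≠ 0 ∧ Projectivization.mk ℂ z hz = q}
        × Circle)) := by
  let M : Set (Fin ℓ → ℂ) := {z | ∏ i, α i z ≠ 0}
  let φ := (α ⟨0, hn⟩).toContinuousLinearMap
  have hφ : ∀ z ∈ M, φ z ≠ 0 := fun z hz h => hz (Finset.prod_eq_zero (Finset.mem_univ _) h)
  have hcone : ∀ c : ℂ, c ≠ 0 → ∀ z ∈ M, c • z ∈ M := by
    intro c hc z hz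
    simp only [M, mem_ofPred_eq, map_smul, smul_eq_mul, Finset.prod_mul_distrib, Finset.prod_const]
    exact mul_ne_zero (pow_ne_zero _ hc) hz
  obtain ⟨e⟩ := nonempty_compl_zero_homotopyEquiv_sphere ℂ
  exact ⟨(Projectivization.coneHomeomorph φ _ hφ hcone).toHomotopyEquiv.trans
    ((ContinuousMap.HomotopyEquiv.refl _).prodCongr e)⟩

/-- The complement `M` of a central arrangement defined by nonzero linear
forms `α₁,…,αₙ` (`n ≥ 1`) on `ℂ^ℓ` is homotopy equivalent to `M* × S¹`, where `M*` is the
projectivized complement and `S¹` is the unit circle in `ℂ`. -/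
theorem complement_homotopy_equiv_projectivized_prod_circle {ℓ n : ℕ} (hn : 1 ≤ n)
    (α : Fin n → ((Fin ℓ → ℂ) →ₗ[ℂ] ℂ)) (hα : ∀ i, α i ≠ 0) :
    Nonempty (ContinuousMap.HomotopyEquiv {z : Fin ℓ → ℂ // (∏ i, α i z) ≠ 0}
      ({q : Projectivization ℂ (Fin ℓ → ℂ) //
          ∃ z : Fin ℓ → ℂ, ∃ hz : z ≠ 0, (∏ i, α i z) ≠ 0 ∧ Projectivization.mk ℂ z hz = q}
        × Circle)) :=
  complement_homotopy_equiv_projectivized_prod_circle_general hn α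
end

section
/- Let Q(x,y,z) = x(x−y)(x+y−z), a polynomial function on ℂ³. Then the polar curve Γ = {(x,y,z) ∈ ℂ³ : ∂Q/∂x = 0, ∂Q/∂y = 0, Q ≠ 0} is exactly the punctured line {(s, 3s, 6s) : s ∈ ℂ, s ≠ 0}; equivalently, Γ is the set of points with y = 3x, z = 2y and Q ≠ 0. -/
/-!
On the polar curve `x ≠ 0`, so `∂Q/∂y = x (z - 2y) = 0` forces `z = 2y`. On that plane
`∂Q/∂x = (3x - y)(x - y)`, and `x ≠ y` because `Q ≠ 0`, so `y = 3x`. Conversely `Q(s, 3s, 6s) = 4s³`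
vanishes only at `s = 0`.
-/

section Derivatives

variable {𝕜 : Type*} [NontriviallyNormedField 𝕜]

theorem deriv_cubic_fst (y z x : 𝕜) :
    deriv (fun x : 𝕜 => x * (x - y) * (x + y - z)) x = 3 * x ^ 2 - 2 * x * z - y ^ 2 + y * z := by
  have h := ((hasDerivAt_id' x).fun_mul ((hasDerivAt_id' x).sub_const y)).fun_mul
    (((hasDerivAt_id' x).add_const y).sub_const z)
  rw [h.deriv]
  ring

theorem deriv_cubic_snd (x z y : 𝕜) :
    deriv (fun y : 𝕜 => x * (x - y) * (x + y - z)) y = x * (z - 2 * y) := by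
  have h := (((hasDerivAt_id' y).const_sub x).const_mul x).fun_mul
    (((hasDerivAt_id' y).const_add x).sub_const z)
  rw [h.deriv]
  ring

end Derivatives

theorem polar_equations_iff {K : Type*} [CommRing K] [IsDomain K] {x y z : K}
    (hQ : x * (x - y) * (x + y - z) ≠ 0) :
    3 * x ^ 2 - 2 * x * z - y ^ 2 + y * z = 0 ∧ x * (z - 2 * y) = 0 ↔ y = 3 * x ∧ z = 2 * y := by
  have hx : x ≠ 0 := left_ne_zero_of_mul (left_ne_zero_of_mul hQ)
  have hxy : x - y ≠ 0 := right_ne_zero_of_mul (left_ne_zero_of_mul hQ)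
  constructor
  · rintro ⟨hfst, hsnd⟩
    have hz : z = 2 * y := by
      linear_combination (mul_eq_zero.mp hsnd).resolve_left hx
    subst hz
    have hfac : (3 * x - y) * (x - y) = 0 := by linear_combination hfst
    exact ⟨by linear_combination -(mul_eq_zero.mp hfac).resolve_right hxy, rfl⟩
  · rintro ⟨rfl, rfl⟩
    constructor <;> ring

theorem mem_polar_curve_iff {𝕜 : Type*} [NontriviallyNormedField 𝕜] (x y z : 𝕜) :
    (deriv (fun x : 𝕜 => x * (x - y) * (x + y - z)) x = 0 ∧
        deriv (fun y : 𝕜 => x * (x - y) * (x + y - z)) y = 0 ∧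
        x * (x - y) * (x + y - z) ≠ 0) ↔
      y = 3 * x ∧ z = 2 * y ∧ x * (x - y) * (x + y - z) ≠ 0 := by
  rw [deriv_cubic_fst, deriv_cubic_snd, ← and_assoc, ← and_assoc]
  exact and_congr_left polar_equations_iff

theorem cubic_ne_zero_on_line_iff {K : Type*} [Field K] [NeZero (2 : K)] (s : K) :
    s * (s - 3 * s) * (s + 3 * s - 2 * (3 * s)) ≠ 0 ↔ s ≠ 0 := by
  have h : s * (s - 3 * s) * (s + 3 * s - 2 * (3 * s)) = 2 ^ 2 * s ^ 3 := by ring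
  simp [h, NeZero.ne]

/-- For `Q(x,y,z) = x(x−y)(x+y−z)` on `ℂ³`, the polar curve
`Γ = {∂Q/∂x = 0, ∂Q/∂y = 0, Q ≠ 0}` is exactly the punctured line
`{(s, 3s, 6s) : s ≠ 0}`; equivalently, it is the set of points with `y = 3x`, `z = 2y`
and `Q ≠ 0`. -/
theorem polar_curve_of_example_arrangement :
    {p : ℂ × ℂ × ℂ |
        deriv (fun x : ℂ => x * (x - p.2.1) * (x + p.2.1 - p.2.2)) p.1 = 0 ∧
        deriv (fun y : ℂ => p.1 * (p.1 - y) * (p.1 + y - p.2.2)) p.2.1 = 0 ∧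
        p.1 * (p.1 - p.2.1) * (p.1 + p.2.1 - p.2.2) ≠ 0} =
      {p : ℂ × ℂ × ℂ | ∃ s : ℂ, s ≠ 0 ∧ p = (s, 3 * s, 6 * s)} ∧
    {p : ℂ × ℂ × ℂ |
        deriv (fun x : ℂ => x * (x - p.2.1) * (x + p.2.1 - p.2.2)) p.1 = 0 ∧
        deriv (fun y : ℂ => p.1 * (p.1 - y) * (p.1 + y - p.2.2)) p.2.1 = 0 ∧
        p.1 * (p.1 - p.2.1) * (p.1 + p.2.1 - p.2.2) ≠ 0} =
      {p : ℂ × ℂ × ℂ | p.2.1 = 3 * p.1 ∧ p.2.2 = 2 * p.2.1 ∧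
        p.1 * (p.1 - p.2.1) * (p.1 + p.2.1 - p.2.2) ≠ 0} := by
  have hpolar := Set.ext fun p : ℂ × ℂ × ℂ => mem_polar_curve_iff p.1 p.2.1 p.2.2
  refine ⟨?_, hpolar⟩
  rw [hpolar]
  ext ⟨x, y, z⟩
  simp only [Set.mem_ofPred_eq, Prod.mk.injEq]
  constructor
  · rintro ⟨rfl, rfl, hQ⟩
    exact ⟨x, (cubic_ne_zero_on_line_iff x).mp hQ, rfl, rfl, by ring⟩
  · rintro ⟨s, hs, rfl, rfl, rfl⟩
    refine ⟨rfl, by ring, ?_⟩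
    rw [show 6 * x = 2 * (3 * x) by ring]
    exact (cubic_ne_zero_on_line_iff x).mpr hs
end
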